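/- For any missingness pattern r' and discrete (X, Y, R) with positivity, the exponential tilting (Tukey's) representation holds: f(y | x, R = r') = OR(y, r' | x) f(y | x, R = 1) / E{OR(Y, r' | x) | x, R = 1}, where OR(y, r | x) = [p(r | x, y) p(R=1 | x, y_0)] / [p(r | x, y_0) p(R=1 | x, y)]. -/

import Mathlib

/-!
Write `J(r, y) = P(X = x, Y = y, R = r)`. Then `p(r | x, y) = J(r, y) / P(X = x, Y = y)`, so in the
odds ratio the marginals `P(X = x, Y = y)` and `P(X = x, Y = y₀)` cancel, and
`OR(y, r | x) f(y | x, R = 1) = J(r, y) · C` with a constant `C ≠ 0` that does not depend on `y`.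
Normalising over `y` removes `C` and leaves `J(r, y) / ∑ J(r, ·) = f(y | x, R = r)`.
-/

open Finset
open scoped Classical

noncomputable def pr {Ω : Type*} [Fintype Ω] (μ : Ω → ℝ) (A : Ω → Prop) : ℝ :=
  ∑ ω, if A ω then μ ω else 0

noncomputable def cpr {Ω : Type*} [Fintype Ω] (μ : Ω → ℝ) (A B : Ω → Prop) : ℝ :=
  pr μ (fun ω => A ω ∧ B ω) / pr μ B

lemma pr_congr {Ω : Type*} [Fintype Ω] (μ : Ω → ℝ) {A B : Ω → Prop}
    (h : ∀ ω, A ω ↔ B ω) : pr μ A = pr μ B :=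
  congrArg (pr μ) (funext fun ω => propext (h ω))

lemma pr_eq_sum_pr_and {Ω β : Type*} [Fintype Ω] [Fintype β] (μ : Ω → ℝ) (f : Ω → β)
    (Q : Ω → Prop) : pr μ Q = ∑ b, pr μ (fun ω => f ω = b ∧ Q ω) := by
  unfold pr
  rw [sum_comm]
  refine sum_congr rfl fun ω _ => ?_
  by_cases hQ : Q ω <;> simp [hQ]

section

variable {Ω 𝒳 𝒴 : Type*} [Fintype Ω] [Fintype 𝒴] {p : ℕ}

/-- The propensity `p(R = r | X = x, Y = y)` of missingness pattern `r`. -/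
noncomputable def patProp (μ : Ω → ℝ) (X : Ω → 𝒳) (Y : Ω → Fin p → 𝒴)
    (R : Ω → Fin p → Bool) (r : Fin p → Bool) (x : 𝒳) (y : Fin p → 𝒴) : ℝ :=
  cpr μ (fun ω => ∀ j, R ω j = r j) (fun ω => X ω = x ∧ ∀ j, Y ω j = y j)

/-- The odds ratio function `OR(y, r | x)` with reference value `y₀`. -/
noncomputable def orFn (μ : Ω → ℝ) (X : Ω → 𝒳) (Y : Ω → Fin p → 𝒴)
    (R : Ω → Fin p → Bool) (y₀ : Fin p → 𝒴) (y : Fin p → 𝒴) (r : Fin p → Bool)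
    (x : 𝒳) : ℝ :=
  (patProp μ X Y R r x y * patProp μ X Y R (fun _ => true) x y₀) /
    (patProp μ X Y R r x y₀ * patProp μ X Y R (fun _ => true) x y)

/-- The baseline outcome density `f(y | x, R = 1)` of the complete cases. -/
noncomputable def baseOut (μ : Ω → ℝ) (X : Ω → 𝒳) (Y : Ω → Fin p → 𝒴)
    (R : Ω → Fin p → Bool) (y : Fin p → 𝒴) (x : 𝒳) : ℝ :=
  cpr μ (fun ω => ∀ j, Y ω j = y j) (fun ω => X ω = x ∧ ∀ j, R ω j = true)

end

section

variable {Ω 𝒳 𝒴 : Type*} [Fintype Ω] {p : ℕ}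
  (μ : Ω → ℝ) (X : Ω → 𝒳) (Y : Ω → Fin p → 𝒴) (R : Ω → Fin p → Bool) (x : 𝒳)

noncomputable def jointPr (r : Fin p → Bool) (y : Fin p → 𝒴) : ℝ :=
  pr μ (fun ω => (∀ j, Y ω j = y j) ∧ X ω = x ∧ ∀ j, R ω j = r j)

lemma patProp_eq_jointPr_div (r : Fin p → Bool) (y : Fin p → 𝒴) :
    patProp μ X Y R r x y =
      jointPr μ X Y R x r y / pr μ (fun ω => X ω = x ∧ ∀ j, Y ω j = y j) := by
  unfold patProp cpr jointPr
  congr 1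
  exact pr_congr μ fun ω => by tauto

lemma jointPr_pos {r : Fin p → Bool} {y : Fin p → 𝒴}
    (hsupp : 0 < pr μ (fun ω => X ω = x ∧ ∀ j, Y ω j = y j))
    (hpos : 0 < patProp μ X Y R r x y) : 0 < jointPr μ X Y R x r y := by
  rw [patProp_eq_jointPr_div] at hpos
  exact (div_pos_iff_of_pos_right hsupp).mp hpos

variable [Fintype 𝒴]

lemma pr_eq_sum_jointPr (r : Fin p → Bool) :
    pr μ (fun ω => X ω = x ∧ ∀ j, R ω j = r j) = ∑ y, jointPr μ X Y R x r y := by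
  simpa only [jointPr, funext_iff] using
    pr_eq_sum_pr_and μ Y (fun ω => X ω = x ∧ ∀ j, R ω j = r j)

lemma cpr_eq_jointPr_div_sum (r : Fin p → Bool) (y : Fin p → 𝒴) :
    cpr μ (fun ω => ∀ j, Y ω j = y j) (fun ω => X ω = x ∧ ∀ j, R ω j = r j) =
      jointPr μ X Y R x r y / ∑ y', jointPr μ X Y R x r y' := by
  rw [cpr, pr_eq_sum_jointPr μ X Y R x r]
  rfl

lemma baseOut_eq_jointPr_div (y : Fin p → 𝒴) :
    baseOut μ X Y R y x =
      jointPr μ X Y R x (fun _ => true) y / ∑ y', jointPr μ X Y R x (fun _ => true) y' := by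
  rw [baseOut, cpr_eq_jointPr_div_sum]

noncomputable def tiltConst (y₀ : Fin p → 𝒴) (r : Fin p → Bool) : ℝ :=
  jointPr μ X Y R x (fun _ => true) y₀ /
    (jointPr μ X Y R x r y₀ * ∑ y, jointPr μ X Y R x (fun _ => true) y)

lemma tiltConst_pos (hJ : ∀ r y, 0 < jointPr μ X Y R x r y) (y₀ : Fin p → 𝒴)
    (r : Fin p → Bool) : 0 < tiltConst μ X Y R x y₀ r :=
  div_pos (hJ _ y₀) (mul_pos (hJ r y₀) (sum_pos (fun y _ => hJ _ y) ⟨y₀, mem_univ y₀⟩))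

lemma orFn_mul_baseOut
    (hsupp : ∀ y : Fin p → 𝒴, 0 < pr μ (fun ω => X ω = x ∧ ∀ j, Y ω j = y j))
    (hJ : ∀ r y, 0 < jointPr μ X Y R x r y) (y₀ : Fin p → 𝒴) (r : Fin p → Bool)
    (y : Fin p → 𝒴) :
    orFn μ X Y R y₀ y r x * baseOut μ X Y R y x =
      jointPr μ X Y R x r y * tiltConst μ X Y R x y₀ r := by
  rw [orFn, baseOut_eq_jointPr_div, tiltConst]
  simp only [patProp_eq_jointPr_div]
  field_simp [(hsupp y).ne', (hsupp y₀).ne', (hJ r y₀).ne', (hJ (fun _ => true) y).ne']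

end

section

variable {Ω 𝒳 𝒴 : Type*} [Fintype Ω] [Fintype 𝒴] {p : ℕ}

theorem stmt10_general (μ : Ω → ℝ)
    (X : Ω → 𝒳) (Y : Ω → Fin p → 𝒴) (R : Ω → Fin p → Bool)
    (x : 𝒳) (y₀ : Fin p → 𝒴)
    (hsupp : ∀ y' : Fin p → 𝒴, pr μ (fun ω => X ω = x ∧ ∀ j, Y ω j = y' j) > 0)
    (hpos : ∀ (r' : Fin p → Bool) (y' : Fin p → 𝒴), patProp μ X Y R r' x y' > 0)
    (r' : Fin p → Bool) (y : Fin p → 𝒴) :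
    cpr μ (fun ω => ∀ j, Y ω j = y j) (fun ω => X ω = x ∧ ∀ j, R ω j = r' j)
      = orFn μ X Y R y₀ y r' x * baseOut μ X Y R y x /
        ∑ y' : Fin p → 𝒴, orFn μ X Y R y₀ y' r' x * baseOut μ X Y R y' x := by
  have hJ r y := jointPr_pos μ X Y R x (hsupp y) (hpos r y)
  simp only [orFn_mul_baseOut μ X Y R x hsupp hJ, ← sum_mul]
  rw [mul_div_mul_right _ _ (tiltConst_pos μ X Y R x hJ y₀ r').ne', cpr_eq_jointPr_div_sum]

/-- the exponential tilting (Tukey) representation: for any pattern `r'`,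
`f(y | x, R = r') = OR(y, r' | x) f(y | x, R = 1) / E{OR(Y, r' | x) | x, R = 1}`. -/
theorem stmt10 (μ : Ω → ℝ) (hμ0 : ∀ ω, 0 ≤ μ ω) (hμ1 : ∑ ω, μ ω = 1)
    (X : Ω → 𝒳) (Y : Ω → Fin p → 𝒴) (R : Ω → Fin p → Bool)
    (x : 𝒳) (y₀ : Fin p → 𝒴)
    (hsupp : ∀ y' : Fin p → 𝒴, pr μ (fun ω => X ω = x ∧ ∀ j, Y ω j = y' j) > 0)
    (hpos : ∀ (r' : Fin p → Bool) (y' : Fin p → 𝒴), patProp μ X Y R r' x y' > 0)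
    (r' : Fin p → Bool) (y : Fin p → 𝒴) :
    cpr μ (fun ω => ∀ j, Y ω j = y j) (fun ω => X ω = x ∧ ∀ j, R ω j = r' j)
      = orFn μ X Y R y₀ y r' x * baseOut μ X Y R y x /
        ∑ y' : Fin p → 𝒴, orFn μ X Y R y₀ y' r' x * baseOut μ X Y R y' x :=
  stmt10_general μ X Y R x y₀ hsupp hpos r' y

end
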